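/- Suppose that for some real a > 2 the (k+1)-th largest eigenvalue of the p×p matrix A = Σ_{i=1}^k λ_i ξ_i ξ_i^T + ρ δ δ^T satisfies λ_{k+1}(A) > a·λ_{k+1}, where λ_{k+1} is the (k+1)-th largest eigenvalue of Σ. Let U_1 be the p×(k+1) matrix formed by the first k+1 columns of U. Then ||U_1^T δ||_2 ≥ ((a−2)/(a−1)) ||δ||_2. (Theorem 3, first conclusion) -/
import Mathlib

open Matrix

namespace REPaux

lemma dot_vmv {p : ℕ} (x y v w : Fin p → ℝ) :
    v ⬝ᵥ (vecMulVec x y).mulVec w = (v ⬝ᵥ x) * (y ⬝ᵥ w) := by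
  simp only [vecMulVec, mulVec, dotProduct, of_apply, Finset.mul_sum, Finset.sum_mul]
  rw [Finset.sum_comm]
  refine Finset.sum_congr rfl fun i _ => Finset.sum_congr rfl fun j _ => by ring

lemma vecMul_orth {p : ℕ} {W : Matrix (Fin p) (Fin p) ℝ} (hW : Wᵀ * W = 1)
    (c : Fin p → ℝ) : (W *ᵥ c) ᵥ* W = c := by
  have h := congrArg (fun M => c ᵥ* M) hW
  simpa [← Matrix.vecMul_vecMul, Matrix.vecMul_transpose] using h

lemma norm_preserve {p : ℕ} {W : Matrix (Fin p) (Fin p) ℝ} (hW : Wᵀ * W = 1)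
    (c : Fin p → ℝ) : (W *ᵥ c) ⬝ᵥ (W *ᵥ c) = c ⬝ᵥ c := by
  rw [Matrix.dotProduct_mulVec, vecMul_orth hW]

lemma quad_diag {p : ℕ} {W M : Matrix (Fin p) (Fin p) ℝ} {d : Fin p → ℝ}
    (hW : Wᵀ * W = 1) (h : Wᵀ * M * W = Matrix.diagonal d) (c : Fin p → ℝ) :
    (W *ᵥ c) ⬝ᵥ (M *ᵥ (W *ᵥ c)) = ∑ j, d j * c j ^ 2 := by
  have h1 : W * Wᵀ = 1 := mul_eq_one_comm.mp hW
  have hM : M = W * Matrix.diagonal d * Wᵀ := by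
    calc M = (W * Wᵀ) * M * (W * Wᵀ) := by rw [h1]; simp
    _ = W * (Wᵀ * M * W) * Wᵀ := by simp only [Matrix.mul_assoc]
    _ = W * Matrix.diagonal d * Wᵀ := by rw [h]
  have h2 : Wᵀ *ᵥ (W *ᵥ c) = c := by rw [Matrix.mulVec_mulVec, hW, Matrix.one_mulVec]
  rw [hM, ← Matrix.mulVec_mulVec, ← Matrix.mulVec_mulVec, h2,
    Matrix.dotProduct_mulVec, vecMul_orth hW]
  simp [Matrix.mulVec_diagonal, dotProduct]
  exact Finset.sum_congr rfl fun j _ => by ring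

lemma exists_ker {m n : ℕ} (h : n < m) (M : Matrix (Fin n) (Fin m) ℝ) :
    ∃ c : Fin m → ℝ, c ≠ 0 ∧ M *ᵥ c = 0 := by
  have : ¬ Function.Injective M.mulVecLin := by
    intro hi
    have := LinearMap.finrank_le_finrank_of_injective hi
    simp [Module.finrank_fin_fun] at this
    omega
  rw [Function.not_injective_iff] at this
  obtain ⟨x, y, hxy, hne⟩ := this
  have h0 : M.mulVecLin (x - y) = 0 := by rw [map_sub, hxy, sub_self]
  exact ⟨x - y, sub_ne_zero.mpr hne, by simpa [Matrix.mulVecLin_apply] using h0⟩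

lemma sum_restrict {m p : ℕ} (h : m ≤ p) (f : Fin p → ℝ)
    (hf : ∀ j : Fin p, m ≤ (j : ℕ) → f j = 0) :
    ∑ j, f j = ∑ i : Fin m, f (Fin.castLE h i) := by
  have h1 : ∑ i : Fin m, f (Fin.castLE h i)
      = ∑ j ∈ Finset.univ.map (Fin.castLEEmb h), f j := by
    rw [Finset.sum_map]; rfl
  rw [h1]
  refine (Finset.sum_subset (Finset.subset_univ _) ?_).symm
  intro j _ hj
  refine hf j ?_
  by_contra hlt
  push_neg at hlt
  exact hj (Finset.mem_map.mpr ⟨⟨j, hlt⟩, Finset.mem_univ _, rfl⟩)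

lemma sum_mulVec {ι : Type*} {p : ℕ} (s : Finset ι) (M : ι → Matrix (Fin p) (Fin p) ℝ)
    (v : Fin p → ℝ) : (∑ i ∈ s, M i) *ᵥ v = ∑ i ∈ s, (M i *ᵥ v) := by
  induction s using Finset.cons_induction with
  | empty => simp
  | cons a s ha ih => simp [Finset.sum_cons, Matrix.add_mulVec, ih]

lemma dot_sum {ι : Type*} {p : ℕ} (s : Finset ι) (v : Fin p → ℝ) (f : ι → (Fin p → ℝ)) :
    v ⬝ᵥ (∑ i ∈ s, f i) = ∑ i ∈ s, v ⬝ᵥ f i := by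
  induction s using Finset.cons_induction with
  | empty => simp
  | cons a s ha ih => simp [Finset.sum_cons, dotProduct_add, ih]

/-- Transfer of a dot product with `W *ᵥ ct` where `ct` is supported on the first
`m` coordinates. -/
lemma dot_mulVec_restrict {m p : ℕ} (h : m ≤ p) (W : Matrix (Fin p) (Fin p) ℝ)
    (c : Fin m → ℝ) (ct : Fin p → ℝ)
    (hcast : ∀ i : Fin m, ct (Fin.castLE h i) = c i)
    (hzero : ∀ j : Fin p, m ≤ (j : ℕ) → ct j = 0) (x : Fin p → ℝ) :
    x ⬝ᵥ (W *ᵥ ct) = ∑ i : Fin m, c i * (x ⬝ᵥ (fun mm => W mm (Fin.castLE h i))) := by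
  have h1 : x ⬝ᵥ (W *ᵥ ct) = ∑ j : Fin p, ct j * (x ⬝ᵥ (fun mm => W mm j)) := by
    simp only [Matrix.mulVec, dotProduct, Finset.mul_sum]
    rw [Finset.sum_comm]
    exact Finset.sum_congr rfl fun j _ => Finset.sum_congr rfl fun mm _ => by ring
  rw [h1, REPaux.sum_restrict h _ (fun j hj => by rw [hzero j hj, zero_mul])]
  exact Finset.sum_congr rfl fun i _ => by rw [hcast]

end REPaux

set_option maxHeartbeats 1000000 in
/-- Theorem 3 (first conclusion): if the (k+1)-th largest eigenvalue `μ_{k+1}` of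
`A = ∑_{i=1}^k λ_i ξ_i ξ_iᵀ + ρ δ δᵀ` exceeds `a·λ_{k+1}` for some `a > 2`, then
`‖U₁ᵀ δ‖₂ ≥ ((a−2)/(a−1))·‖δ‖₂`, where `U₁` consists of the first `k+1` columns
of `U`. -/
theorem rotation_energy_preservation
    {p k : ℕ} (hkp : k + 1 ≤ p)
    (S : Matrix (Fin p) (Fin p) ℝ) (hS : S.IsSymm)
    (lam : Fin p → ℝ) (xi : Fin p → (Fin p → ℝ))
    (hpos : ∀ j, 0 < lam j)
    (hdesc : ∀ i j : Fin p, i ≤ j → lam j ≤ lam i)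
    (horth : ∀ i j : Fin p, xi i ⬝ᵥ xi j = if i = j then (1 : ℝ) else 0)
    (heig : ∀ j, S.mulVec (xi j) = lam j • xi j)
    (δ : Fin p → ℝ) (ρ : ℝ) (hρ : 0 < ρ)
    (U : Matrix (Fin p) (Fin p) ℝ) (hU : Uᵀ * U = 1)
    (η : Fin p → ℝ) (hηdesc : ∀ i j : Fin p, i ≤ j → η j ≤ η i)
    (hdiag : Uᵀ * (S + ρ • vecMulVec δ δ) * U = Matrix.diagonal η)
    -- eigenvalues (in descending order) of A = ∑_{i=1}^k λ_i ξ_i ξ_iᵀ + ρ δ δᵀ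
    (μ : Fin p → ℝ) (hμdesc : ∀ i j : Fin p, i ≤ j → μ j ≤ μ i)
    (V : Matrix (Fin p) (Fin p) ℝ) (hV : Vᵀ * V = 1)
    (hAdiag : Vᵀ *
        ((∑ i : Fin k, lam ⟨i.1, by omega⟩ •
            vecMulVec (xi ⟨i.1, by omega⟩) (xi ⟨i.1, by omega⟩)) +
          ρ • vecMulVec δ δ) * V = Matrix.diagonal μ)
    -- λ_{k+1}(A) > a·λ_{k+1} for some a > 2
    (a : ℝ) (ha : 2 < a)
    (hA : a * lam ⟨k, hkp⟩ < μ ⟨k, hkp⟩) :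
    (a - 2) / (a - 1) * Real.sqrt (∑ i, δ i ^ 2) ≤
      Real.sqrt (∑ j, ((U.submatrix id (Fin.castLE hkp))ᵀ.mulVec δ j) ^ 2) := by
  classical
  have hdot : ∀ x : Fin p → ℝ, x ⬝ᵥ x = ∑ i, x i ^ 2 := by
    intro x; simp [dotProduct, sq]
  set D : ℝ := ∑ i, δ i ^ 2 with hDdef
  set w : Fin p → ℝ := Uᵀ *ᵥ δ with hwdef
  set t : ℝ := ∑ i : Fin (k + 1), w (Fin.castLE hkp i) ^ 2 with htdef
  -- the right-hand side sum is `t`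
  have hre : (∑ j, ((U.submatrix id (Fin.castLE hkp))ᵀ.mulVec δ j) ^ 2) = t := by
    refine Finset.sum_congr rfl fun j _ => ?_
    rfl
  -- eigenbasis matrix of S
  set Xi : Matrix (Fin p) (Fin p) ℝ := Matrix.of (fun i j => xi j i) with hXidef
  have hXi : Xiᵀ * Xi = 1 := by
    ext i j
    simpa [Matrix.mul_apply, Matrix.one_apply, dotProduct, Xi] using horth i j
  have hXi2 : Xi * Xiᵀ = 1 := mul_eq_one_comm.mp hXi
  have hXiS : Xiᵀ * S * Xi = Matrix.diagonal lam := by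
    have hSXi : S * Xi = Xi * Matrix.diagonal lam := by
      ext i j
      have h1 := congrFun (heig j) i
      simp only [Matrix.mulVec, dotProduct, Pi.smul_apply, smul_eq_mul] at h1
      rw [Matrix.mul_diagonal]
      simp only [Matrix.mul_apply, Xi, Matrix.of_apply]
      rw [h1]; ring
    calc Xiᵀ * S * Xi = Xiᵀ * (S * Xi) := by rw [Matrix.mul_assoc]
    _ = (Xiᵀ * Xi) * Matrix.diagonal lam := by rw [hSXi, Matrix.mul_assoc]
    _ = Matrix.diagonal lam := by rw [hXi, Matrix.one_mul]
  have hcoord : ∀ (v : Fin p → ℝ) (j : Fin p), (Xiᵀ *ᵥ v) j = xi j ⬝ᵥ v := by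
    intro v j; simp [Matrix.mulVec, dotProduct, Xi, Matrix.transpose_apply]
  have hSquad : ∀ v : Fin p → ℝ, v ⬝ᵥ (S *ᵥ v) = ∑ j, lam j * (xi j ⬝ᵥ v) ^ 2 := by
    intro v
    have hv : Xi *ᵥ (Xiᵀ *ᵥ v) = v := by rw [Matrix.mulVec_mulVec, hXi2, Matrix.one_mulVec]
    have h1 := REPaux.quad_diag hXi hXiS (Xiᵀ *ᵥ v)
    rw [hv] at h1
    rw [h1]
    exact Finset.sum_congr rfl fun j _ => by rw [hcoord]
  have hParseval : ∀ v : Fin p → ℝ, ∑ j, (xi j ⬝ᵥ v) ^ 2 = v ⬝ᵥ v := by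
    intro v
    have h1 := REPaux.norm_preserve (W := Xiᵀ)
      (by rw [Matrix.transpose_transpose]; exact hXi2) v
    rw [hdot (Xiᵀ *ᵥ v)] at h1
    rw [← h1]
    exact Finset.sum_congr rfl fun j _ => by rw [hcoord]
  -- quadratic form of Σtot
  have hTquad : ∀ v : Fin p → ℝ,
      v ⬝ᵥ ((S + ρ • vecMulVec δ δ) *ᵥ v) = v ⬝ᵥ (S *ᵥ v) + ρ * (δ ⬝ᵥ v) ^ 2 := by
    intro v
    rw [Matrix.add_mulVec, dotProduct_add, Matrix.smul_mulVec,
      dotProduct_smul, REPaux.dot_vmv δ δ v v, dotProduct_comm v δ]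
    rw [smul_eq_mul]
    ring
  have hSnonneg : ∀ v : Fin p → ℝ, 0 ≤ v ⬝ᵥ (S *ᵥ v) := by
    intro v
    rw [hSquad]
    exact Finset.sum_nonneg fun j _ => mul_nonneg (hpos j).le (sq_nonneg _)
  -- quadratic form of A vanishing on the xi-constraints
  have hAquad : ∀ v : Fin p → ℝ, (∀ i : Fin k, xi ⟨i.1, by omega⟩ ⬝ᵥ v = 0) →
      v ⬝ᵥ (((∑ i : Fin k, lam ⟨i.1, by omega⟩ •
            vecMulVec (xi ⟨i.1, by omega⟩) (xi ⟨i.1, by omega⟩)) +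
          ρ • vecMulVec δ δ) *ᵥ v) = ρ * (δ ⬝ᵥ v) ^ 2 := by
    intro v hc
    rw [Matrix.add_mulVec, dotProduct_add, REPaux.sum_mulVec, REPaux.dot_sum]
    have h1 : ∀ i : Fin k, v ⬝ᵥ ((lam ⟨i.1, by omega⟩ •
        vecMulVec (xi ⟨i.1, by omega⟩) (xi ⟨i.1, by omega⟩)) *ᵥ v) = 0 := by
      intro i
      rw [Matrix.smul_mulVec, dotProduct_smul, REPaux.dot_vmv, hc i]
      simp
    rw [Finset.sum_congr rfl fun i _ => h1 i]
    rw [Matrix.smul_mulVec, dotProduct_smul, REPaux.dot_vmv,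
      dotProduct_comm v δ]
    rw [smul_eq_mul]
    simp [sq]
  have hD0 : 0 ≤ D := Finset.sum_nonneg fun _ _ => sq_nonneg _
  ------------------------------------------------------------------
  -- Fact A : μ_{k+1} ≤ ρ D
  ------------------------------------------------------------------
  have hfactA : μ ⟨k, hkp⟩ ≤ ρ * D := by
    obtain ⟨c, hc0, hcker⟩ := REPaux.exists_ker (show k < k + 1 by omega)
      (Matrix.of fun (i : Fin k) (j : Fin (k + 1)) =>
        xi ⟨i.1, by omega⟩ ⬝ᵥ (fun m => V m (Fin.castLE hkp j)))
    set ct : Fin p → ℝ := fun j => if hj : (j : ℕ) < k + 1 then c ⟨j.1, hj⟩ else 0 with hctdef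
    have hctcast : ∀ i : Fin (k + 1), ct (Fin.castLE hkp i) = c i := by
      intro i
      simp only [ct]
      rw [dif_pos (by simpa using i.isLt)]
      exact congrArg c (Fin.ext (by simp))
    have hctzero : ∀ j : Fin p, k + 1 ≤ (j : ℕ) → ct j = 0 := by
      intro j hj
      simp only [ct]
      rw [dif_neg (by omega)]
    set v : Fin p → ℝ := V *ᵥ ct with hvdef
    have hxiv : ∀ i : Fin k, xi ⟨i.1, by omega⟩ ⬝ᵥ v = 0 := by
      intro i
      rw [hvdef, REPaux.dot_mulVec_restrict hkp V c ct hctcast hctzero]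
      have h2 := congrFun hcker i
      simp only [Matrix.mulVec, dotProduct, Matrix.of_apply, Pi.zero_apply] at h2
      rw [← h2]
      exact Finset.sum_congr rfl fun j _ => by simp only [dotProduct]; ring
    set n : ℝ := ∑ j, ct j ^ 2 with hndef
    have hn0 : 0 < n := by
      obtain ⟨i0, hi0⟩ := Function.ne_iff.mp hc0
      have h1 : ct (Fin.castLE hkp i0) ^ 2 ≤ n :=
        Finset.single_le_sum (f := fun j => ct j ^ 2) (fun j _ => sq_nonneg _)
          (Finset.mem_univ _)
      have h2 : 0 < ct (Fin.castLE hkp i0) ^ 2 := by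
        rw [hctcast]
        exact (sq_nonneg _).lt_of_ne (Ne.symm (pow_ne_zero 2 hi0))
      linarith
    have hvv : v ⬝ᵥ v = n := by
      rw [hvdef, REPaux.norm_preserve hV, hdot]
    have hquad := REPaux.quad_diag hV hAdiag ct
    have hlow : μ ⟨k, hkp⟩ * n ≤ ∑ j, μ j * ct j ^ 2 := by
      rw [hndef, Finset.mul_sum]
      refine Finset.sum_le_sum fun j _ => ?_
      by_cases hj : (j : ℕ) < k + 1
      · exact mul_le_mul_of_nonneg_right
          (hμdesc j ⟨k, hkp⟩ (by simp [Fin.le_def]; omega)) (sq_nonneg _)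
      · rw [hctzero j (by omega)]; simp
    have hup : ∑ j, μ j * ct j ^ 2 = ρ * (δ ⬝ᵥ v) ^ 2 := by
      rw [← hquad]
      exact hAquad (V *ᵥ ct) hxiv
    have hcs : (δ ⬝ᵥ v) ^ 2 ≤ D * n := by
      have hCS := Finset.sum_mul_sq_le_sq_mul_sq Finset.univ δ v
      have hvv2 : ∑ i, v i ^ 2 = n := by rw [← hdot, hvv]
      calc (δ ⬝ᵥ v) ^ 2 = (∑ i, δ i * v i) ^ 2 := rfl
      _ ≤ (∑ i, δ i ^ 2) * ∑ i, v i ^ 2 := hCS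
      _ = D * n := by rw [hvv2]
    have hchain : μ ⟨k, hkp⟩ * n ≤ ρ * D * n := by
      calc μ ⟨k, hkp⟩ * n ≤ ∑ j, μ j * ct j ^ 2 := hlow
      _ = ρ * (δ ⬝ᵥ v) ^ 2 := hup
      _ ≤ ρ * (D * n) := by nlinarith
      _ = ρ * D * n := by ring
    exact le_of_mul_le_mul_right hchain hn0
  ------------------------------------------------------------------
  -- the tail sum s and the splitting D = t + s
  ------------------------------------------------------------------
  set f : Fin p → ℝ := fun j => if k + 1 ≤ (j : ℕ) then w j else 0 with hfdef
  set s : ℝ := ∑ j, f j ^ 2 with hsdef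
  have hs0 : 0 ≤ s := Finset.sum_nonneg fun _ _ => sq_nonneg _
  have ht0 : 0 ≤ t := Finset.sum_nonneg fun _ _ => sq_nonneg _
  have hwD : ∑ j, w j ^ 2 = D := by
    have h1 := REPaux.norm_preserve (W := Uᵀ)
      (by rw [Matrix.transpose_transpose]; exact mul_eq_one_comm.mp hU) δ
    rw [hdot, hdot] at h1
    exact h1
  have hts : t + s = D := by
    rw [← hwD]
    have hg : t = ∑ j : Fin p, (if (j : ℕ) < k + 1 then w j else 0) ^ 2 := by
      rw [REPaux.sum_restrict hkp (fun j => (if (j : ℕ) < k + 1 then w j else 0) ^ 2)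
        (fun j hj => by
          show (if (j : ℕ) < k + 1 then w j else 0) ^ 2 = 0
          rw [if_neg (by omega)]; simp)]
      exact Finset.sum_congr rfl fun i _ => by rw [if_pos (by simpa using i.isLt)]
    rw [hg, hsdef, ← Finset.sum_add_distrib]
    refine Finset.sum_congr rfl fun j _ => ?_
    simp only [f]
    by_cases hj : (j : ℕ) < k + 1
    · rw [if_pos hj, if_neg (by omega)]; simp
    · rw [if_neg hj, if_pos (by omega)]; simp
  ------------------------------------------------------------------
  -- Facts B and C : ρ s ≤ λ_{k+1}
  ------------------------------------------------------------------
  have hBC : ρ * s ≤ lam ⟨k, hkp⟩ := by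
    by_cases hk2 : k + 2 ≤ p
    · -- Fact B : η_{k+2} ≤ λ_{k+1}
      have hB : η ⟨k + 1, by omega⟩ ≤ lam ⟨k, hkp⟩ := by
        obtain ⟨c, hc0, hcker⟩ := REPaux.exists_ker (show k + 1 < k + 2 by omega)
          (Matrix.of fun (i : Fin (k + 1)) (j : Fin (k + 2)) =>
            (if h : (i : ℕ) < k then xi ⟨i.1, by omega⟩ else δ) ⬝ᵥ
              (fun m => U m (Fin.castLE hk2 j)))
        set ct : Fin p → ℝ := fun j => if hj : (j : ℕ) < k + 2 then c ⟨j.1, hj⟩ else 0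
          with hctdef
        have hctcast : ∀ i : Fin (k + 2), ct (Fin.castLE hk2 i) = c i := by
          intro i
          simp only [ct]
          rw [dif_pos (by simpa using i.isLt)]
          exact congrArg c (Fin.ext (by simp))
        have hctzero : ∀ j : Fin p, k + 2 ≤ (j : ℕ) → ct j = 0 := by
          intro j hj
          simp only [ct]
          rw [dif_neg (by omega)]
        set v : Fin p → ℝ := U *ᵥ ct with hvdef
        have hrv : ∀ i : Fin (k + 1),
            (if h : (i : ℕ) < k then xi ⟨i.1, by omega⟩ else δ) ⬝ᵥ v = 0 := by
          intro i
          rw [hvdef, REPaux.dot_mulVec_restrict hk2 U c ct hctcast hctzero]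
          have h2 := congrFun hcker i
          simp only [Matrix.mulVec, dotProduct, Matrix.of_apply, Pi.zero_apply] at h2
          rw [← h2]
          exact Finset.sum_congr rfl fun j _ => by simp only [dotProduct]; ring
        have hxiv : ∀ i : Fin p, (i : ℕ) < k → xi i ⬝ᵥ v = 0 := by
          intro i hi
          have h3 := hrv ⟨i.1, by omega⟩
          rw [dif_pos (by simpa using hi)] at h3
          simpa using h3
        have hδv : δ ⬝ᵥ v = 0 := by
          have h3 := hrv ⟨k, by omega⟩
          rw [dif_neg (by simp)] at h3
          exact h3
        set n : ℝ := ∑ j, ct j ^ 2 with hndef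
        have hn0 : 0 < n := by
          obtain ⟨i0, hi0⟩ := Function.ne_iff.mp hc0
          have h1 : ct (Fin.castLE hk2 i0) ^ 2 ≤ n :=
            Finset.single_le_sum (f := fun j => ct j ^ 2) (fun j _ => sq_nonneg _)
              (Finset.mem_univ _)
          have h2 : 0 < ct (Fin.castLE hk2 i0) ^ 2 := by
            rw [hctcast]
            exact (sq_nonneg _).lt_of_ne (Ne.symm (pow_ne_zero 2 hi0))
          linarith
        have hvv : v ⬝ᵥ v = n := by
          rw [hvdef, REPaux.norm_preserve hU, hdot]
        have hquad := REPaux.quad_diag hU hdiag ct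
        have hlow : η ⟨k + 1, by omega⟩ * n ≤ ∑ j, η j * ct j ^ 2 := by
          rw [hndef, Finset.mul_sum]
          refine Finset.sum_le_sum fun j _ => ?_
          by_cases hj : (j : ℕ) < k + 2
          · exact mul_le_mul_of_nonneg_right
              (hηdesc j ⟨k + 1, by omega⟩ (by simp [Fin.le_def]; omega)) (sq_nonneg _)
          · rw [hctzero j (by omega)]; simp
        have hup : ∑ j, η j * ct j ^ 2 ≤ lam ⟨k, hkp⟩ * n := by
          rw [← hquad]
          have h4 : (U *ᵥ ct) ⬝ᵥ ((S + ρ • vecMulVec δ δ) *ᵥ (U *ᵥ ct))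
              = v ⬝ᵥ (S *ᵥ v) := by
            rw [← hvdef, hTquad, hδv]
            ring
          rw [h4, hSquad]
          have h5 : ∑ j, lam j * (xi j ⬝ᵥ v) ^ 2 ≤ ∑ j, lam ⟨k, hkp⟩ * (xi j ⬝ᵥ v) ^ 2 := by
            refine Finset.sum_le_sum fun j _ => ?_
            by_cases hj : (j : ℕ) < k
            · rw [hxiv j hj]; simp
            · exact mul_le_mul_of_nonneg_right
                (hdesc ⟨k, hkp⟩ j (by simp [Fin.le_def]; omega)) (sq_nonneg _)
          calc ∑ j, lam j * (xi j ⬝ᵥ v) ^ 2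
              ≤ ∑ j, lam ⟨k, hkp⟩ * (xi j ⬝ᵥ v) ^ 2 := h5
          _ = lam ⟨k, hkp⟩ * (v ⬝ᵥ v) := by rw [← Finset.mul_sum, hParseval]
          _ = lam ⟨k, hkp⟩ * n := by rw [hvv]
        exact le_of_mul_le_mul_right (le_trans hlow hup) hn0
      -- Fact C : ρ s ≤ η_{k+2}
      by_cases hsz : s = 0
      · rw [hsz, mul_zero]
        exact (hpos _).le
      · have hspos : 0 < s := lt_of_le_of_ne hs0 (Ne.symm hsz)
        set v : Fin p → ℝ := U *ᵥ f with hvdef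
        have hquad := REPaux.quad_diag hU hdiag f
        have hupper : ∑ j, η j * f j ^ 2 ≤ η ⟨k + 1, by omega⟩ * s := by
          rw [hsdef, Finset.mul_sum]
          refine Finset.sum_le_sum fun j _ => ?_
          by_cases hj : k + 1 ≤ (j : ℕ)
          · exact mul_le_mul_of_nonneg_right
              (hηdesc ⟨k + 1, by omega⟩ j (by simp [Fin.le_def]; omega)) (sq_nonneg _)
          · have : f j = 0 := by simp only [f]; rw [if_neg hj]
            rw [this]; simp
        have hδv : δ ⬝ᵥ v = s := by
          rw [hvdef, Matrix.dotProduct_mulVec, ← Matrix.mulVec_transpose, ← hwdef,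
            hsdef]
          simp only [dotProduct]
          refine Finset.sum_congr rfl fun j _ => ?_
          simp only [f]
          by_cases hj : k + 1 ≤ (j : ℕ)
          · rw [if_pos hj]; ring
          · rw [if_neg hj]; simp
        have hlower : ρ * s ^ 2 ≤ (U *ᵥ f) ⬝ᵥ ((S + ρ • vecMulVec δ δ) *ᵥ (U *ᵥ f)) := by
          rw [hTquad, ← hvdef, hδv]
          have := hSnonneg v
          nlinarith
        have hC : ρ * s ≤ η ⟨k + 1, by omega⟩ := by
          have h6 : ρ * s ^ 2 ≤ η ⟨k + 1, by omega⟩ * s := by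
            calc ρ * s ^ 2 ≤ (U *ᵥ f) ⬝ᵥ ((S + ρ • vecMulVec δ δ) *ᵥ (U *ᵥ f)) := hlower
            _ = ∑ j, η j * f j ^ 2 := hquad
            _ ≤ η ⟨k + 1, by omega⟩ * s := hupper
          have h7 : (ρ * s) * s ≤ η ⟨k + 1, by omega⟩ * s := by nlinarith
          exact le_of_mul_le_mul_right h7 hspos
        exact le_trans hC hB
    · -- here `p = k + 1`, the tail is empty and `s = 0`
      have hsz : s = 0 := by
        rw [hsdef]
        refine Finset.sum_eq_zero fun j _ => ?_
        have : f j = 0 := by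
          simp only [f]
          rw [if_neg (by omega)]
        rw [this]; simp
      rw [hsz, mul_zero]
      exact (hpos _).le
  ------------------------------------------------------------------
  -- final numeric computation
  ------------------------------------------------------------------
  have ha0 : (0 : ℝ) < a := by linarith
  have ha1 : (0 : ℝ) < a - 1 := by linarith
  have haD : a * lam ⟨k, hkp⟩ < ρ * D := lt_of_lt_of_le hA hfactA
  have has : a * s ≤ D := by
    have h1 : a * (ρ * s) ≤ a * lam ⟨k, hkp⟩ :=
      mul_le_mul_of_nonneg_left hBC ha0.le
    have h2 : a * (ρ * s) < ρ * D := lt_of_le_of_lt h1 haD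
    by_contra hcon
    push_neg at hcon
    have h3 : ρ * D < ρ * (a * s) := (mul_lt_mul_iff_right₀ hρ).mpr hcon
    nlinarith
  have h4 : a * t + a * s = a * D := by rw [← mul_add, hts]
  have hta : (a - 1) * D ≤ a * t := by linarith
  have key : ((a - 2) / (a - 1)) ^ 2 * D ≤ t := by
    have h1 : ((a - 2) / (a - 1)) ^ 2 ≤ (a - 1) / a := by
      rw [div_pow, div_le_div_iff₀ (by positivity) ha0]
      nlinarith [mul_pos (sub_pos.mpr ha) (sub_pos.mpr ha), sq_nonneg (a - 2)]
    calc ((a - 2) / (a - 1)) ^ 2 * D ≤ (a - 1) / a * D :=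
      mul_le_mul_of_nonneg_right h1 hD0
    _ ≤ t := by
      rw [div_mul_eq_mul_div, div_le_iff₀ ha0]
      linarith
  rw [hre]
  have hr0 : 0 ≤ (a - 2) / (a - 1) := div_nonneg (by linarith) ha1.le
  have hsq : (a - 2) / (a - 1) * Real.sqrt D
      = Real.sqrt (((a - 2) / (a - 1)) ^ 2 * D) := by
    rw [Real.sqrt_mul (sq_nonneg _), Real.sqrt_sq hr0]
  rw [hsq]
  exact Real.sqrt_le_sqrt key
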